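/- arXiv:2007.09132 — 2 statements merged into one kernel-verified Lean document; each statement's English description precedes it below -/
import Mathlib

section
/- Let m : J → ℝ be differentiable with continuous derivative m′ and let M = sup_{τ∈J} |m′(τ)|. Then for every τ ∈ J, |(^{ABC}D^α m)(τ)| ≤ (M B(α)/(1−α)) · τ · E_{α,2}((α/(1−α)) τ^α), where E_{α,2}(z) = ∑_{k=0}^∞ z^k / Γ(αk + 2). -/
/-!
Expand the Mittag-Leffler kernel into its power series and integrate term by term. The `n`-th
term is bounded by `M (α/(1-α))ⁿ ∫₀^τ (τ-σ)^{nα}/Γ(nα+1) dσ = M τ (α/(1-α) τ^α)ⁿ/Γ(nα+2)`,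
which is the `n`-th term of `M τ E_{α,2}(α/(1-α) τ^α)`. The series of these bounds converges
because `Γ(x + a) ≥ Γ(x) (x-1)^a` by log-convexity of `Γ`, so the ratio test applies; this
also justifies exchanging sum and integral.
-/

/-- One-parameter Mittag-Leffler function `E_α(z) = ∑ zⁿ / Γ(nα+1)`. -/
noncomputable def mlE (α z : ℝ) : ℝ := ∑' n : ℕ, z ^ n / Real.Gamma (n * α + 1)

/-- Atangana–Baleanu–Caputo fractional derivative of order `α` (base point 0),
with normalization constant `B = B(α)`. -/
noncomputable def abcD (α B : ℝ) (m : ℝ → ℝ) (τ : ℝ) : ℝ :=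
  B / (1 - α) * ∫ σ in (0:ℝ)..τ, mlE α (-(α / (1 - α)) * (τ - σ) ^ α) * deriv m σ


/-- Two-parameter Mittag-Leffler function `E_{α,β}(z) = ∑ zᵏ / Γ(kα+β)`. -/
noncomputable def mlE2 (α β z : ℝ) : ℝ := ∑' k : ℕ, z ^ k / Real.Gamma (k * α + β)

open Real Filter Set MeasureTheory

theorem Real.Gamma_mul_rpow_le_Gamma_add {x a : ℝ} (hx : 1 < x) (ha : 0 < a) :
    Gamma x * (x - 1) ^ a ≤ Gamma (x + a) := by
  have hx1 : 0 < x - 1 := by linarith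
  have hrec : Gamma x = (x - 1) * Gamma (x - 1) := by simpa using Gamma_add_one hx1.ne'
  -- the slope of the convex function `log ∘ Gamma` on `[x - 1, x]` is `log (x - 1)`
  have hslope := convexOn_log_Gamma.slope_mono_adjacent (mem_Ioi.2 hx1)
    (mem_Ioi.2 (by linarith : 0 < x + a)) (by linarith : x - 1 < x) (by linarith : x < x + a)
  simp only [Function.comp_apply, sub_sub_cancel, div_one, add_sub_cancel_left] at hslope
  rw [le_div_iff₀ ha, hrec, log_mul hx1.ne' (Gamma_pos_of_pos hx1).ne'] at hslope
  rw [← log_le_log_iff (by positivity) (Gamma_pos_of_pos (by linarith)), hrec,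
    log_mul (by positivity) (by positivity), log_mul hx1.ne' (Gamma_pos_of_pos hx1).ne',
    log_rpow hx1]
  linarith

theorem summable_pow_div_Gamma_mul_add {a : ℝ} (ha : 0 < a) (y c : ℝ) :
    Summable fun n : ℕ => y ^ n / Gamma (n * a + c) := by
  have hlin : Tendsto (fun n : ℕ => n * a + c - 1) atTop atTop :=
    tendsto_atTop_add_const_right _ _
      (tendsto_atTop_add_const_right _ _ (tendsto_natCast_atTop_atTop.atTop_mul_const ha))
  refine summable_of_ratio_norm_eventually_le one_half_lt_one ?_
  filter_upwards [hlin.eventually_gt_atTop 0,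
    ((tendsto_rpow_atTop ha).comp hlin).eventually_ge_atTop (2 * |y|)] with n hpos hbig
  set x : ℝ := n * a + c with hx
  have hnext : ((n + 1 : ℕ) : ℝ) * a + c = x + a := by rw [hx]; push_cast; ring
  have hΓ : 0 < Gamma x := Gamma_pos_of_pos (by linarith)
  have hΓ' : 0 < Gamma (x + a) := Gamma_pos_of_pos (by linarith)
  have hpow : 0 < (x - 1) ^ a := rpow_pos_of_pos hpos a
  have hbig' : 2 * |y| ≤ (x - 1) ^ a := hbig
  simp only [norm_div, norm_pow, Real.norm_eq_abs, hnext, abs_of_pos hΓ, abs_of_pos hΓ']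
  calc |y| ^ (n + 1) / Gamma (x + a)
      ≤ |y| ^ (n + 1) / (Gamma x * (x - 1) ^ a) := by
        gcongr; exact Gamma_mul_rpow_le_Gamma_add (by linarith) ha
    _ = |y| / (x - 1) ^ a * (|y| ^ n / Gamma x) := by rw [pow_succ]; field_simp
    _ ≤ 1 / 2 * (|y| ^ n / Gamma x) := by
        gcongr ?_ * _
        rw [div_le_iff₀ hpow]; linarith

theorem integral_sub_rpow {p : ℝ} (hp : -1 < p) (τ : ℝ) :
    ∫ σ in (0)..τ, (τ - σ) ^ p = τ ^ (p + 1) / (p + 1) := by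
  rw [intervalIntegral.integral_comp_sub_left (fun u => u ^ p), sub_self, sub_zero,
    integral_rpow (Or.inl hp), zero_rpow (by linarith), sub_zero]

theorem integral_sub_rpow_div_Gamma {p : ℝ} (hp : -1 < p) (τ : ℝ) :
    ∫ σ in (0)..τ, (τ - σ) ^ p / Gamma (p + 1) = τ ^ (p + 1) / Gamma (p + 2) := by
  have hp1 : p + 1 ≠ 0 := by linarith
  rw [intervalIntegral.integral_div, integral_sub_rpow hp, show p + 2 = p + 1 + 1 by ring,
    Gamma_add_one hp1, div_div]

theorem norm_integral_tsum_le {ι α E : Type*} [Countable ι] [MeasurableSpace α] {μ : Measure α}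
    [NormedAddCommGroup E] [NormedSpace ℝ E] {f : ι → α → E} {b : ι → ℝ}
    (hf : ∀ i, Integrable (f i) μ) (hb : Summable b) (hfb : ∀ i, ∫ a, ‖f i a‖ ∂μ ≤ b i) :
    ‖∫ a, ∑' i, f i a ∂μ‖ ≤ ∑' i, b i := by
  rw [← integral_tsum_of_summable_integral_norm hf
    (hb.of_nonneg_of_le (fun i => integral_nonneg fun a => norm_nonneg _) hfb)]
  exact tsum_of_norm_bounded hb.hasSum fun i => (norm_integral_le_integral_norm _).trans (hfb i)

theorem integral_norm_pow_div_Gamma_mul_le {α c τ M : ℝ} (hα : 0 < α) (hc : 0 ≤ c) (hτ : 0 ≤ τ)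
    {g : ℝ → ℝ} (hgM : ∀ σ ∈ Ioc 0 τ, |g σ| ≤ M) (n : ℕ) :
    ∫ σ in Ioc 0 τ, ‖(-c * (τ - σ) ^ α) ^ n / Gamma (n * α + 1) * g σ‖
      ≤ M * τ * ((c * τ ^ α) ^ n / Gamma (n * α + 2)) := by
  have hnα : -1 < (n * α : ℝ) := by linarith [show 0 ≤ (n * α : ℝ) by positivity]
  have hpt : ∀ σ ∈ Ioc 0 τ, ‖(-c * (τ - σ) ^ α) ^ n / Gamma (n * α + 1) * g σ‖
      ≤ M * c ^ n * ((τ - σ) ^ (n * α) / Gamma (n * α + 1)) := by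
    rintro σ ⟨hσ0, hστ⟩
    have hτσ : 0 ≤ τ - σ := by linarith
    rw [Real.norm_eq_abs, abs_mul, abs_div, abs_pow, abs_mul, abs_neg, abs_of_nonneg hc,
      abs_of_nonneg (rpow_nonneg hτσ _), abs_of_pos (Gamma_pos_of_pos (by linarith)),
      mul_comm (n : ℝ), rpow_mul_natCast hτσ, mul_pow]
    calc c ^ n * ((τ - σ) ^ α) ^ n / Gamma (α * n + 1) * |g σ|
        ≤ c ^ n * ((τ - σ) ^ α) ^ n / Gamma (α * n + 1) * M := by
          gcongr; exact hgM σ ⟨hσ0, hστ⟩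
      _ = _ := by ring
  calc _ ≤ ∫ σ in Ioc 0 τ, M * c ^ n * ((τ - σ) ^ (n * α) / Gamma (n * α + 1)) :=
        integral_mono_of_nonneg (.of_forall fun _ => norm_nonneg _)
          (Continuous.integrableOn_Ioc (by fun_prop (disch := positivity)))
          ((ae_restrict_iff' measurableSet_Ioc).2 (.of_forall hpt))
    _ = M * c ^ n * (τ ^ (n * α + 1) / Gamma (n * α + 2)) := by
        rw [integral_const_mul, ← intervalIntegral.integral_of_le hτ,
          integral_sub_rpow_div_Gamma hnα]
    _ = M * τ * ((c * τ ^ α) ^ n / Gamma (n * α + 2)) := by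
        rw [rpow_add' hτ (by linarith), rpow_one, mul_comm (n : ℝ), rpow_mul_natCast hτ]
        ring

theorem abs_integral_mlE_mul_le {α c τ M : ℝ} (hα : 0 < α) (hc : 0 ≤ c) (hτ : 0 ≤ τ)
    {g : ℝ → ℝ} (hg : ContinuousOn g (Icc 0 τ)) (hgM : ∀ σ ∈ Icc 0 τ, |g σ| ≤ M) :
    |∫ σ in (0)..τ, mlE α (-c * (τ - σ) ^ α) * g σ| ≤ M * τ * mlE2 α 2 (c * τ ^ α) := by
  have hpow : Continuous fun σ => (τ - σ) ^ α := by fun_prop (disch := positivity)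
  have hterm (n : ℕ) : IntegrableOn (fun σ => (-c * (τ - σ) ^ α) ^ n / Gamma (n * α + 1) * g σ)
      (Ioc 0 τ) :=
    ((by fun_prop : Continuous fun σ => (-c * (τ - σ) ^ α) ^ n / Gamma (n * α + 1)).continuousOn.mul
      hg).integrableOn_Icc.mono_set Ioc_subset_Icc_self
  rw [intervalIntegral.integral_of_le hτ, ← Real.norm_eq_abs, mlE2, ← tsum_mul_left]
  simp only [mlE, ← tsum_mul_right]
  exact norm_integral_tsum_le hterm ((summable_pow_div_Gamma_mul_add hα _ _).mul_left _)
    (integral_norm_pow_div_Gamma_mul_le hα hc hτ fun σ hσ => hgM σ (Ioc_subset_Icc_self hσ))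

theorem abc_deriv_bound_general
    (T α B M : ℝ) (hα : 0 < α) (hα1 : α < 1) (hB : 0 < B)
    (m : ℝ → ℝ)
    (hm' : ContinuousOn (deriv m) (Set.Icc (0:ℝ) T))
    (hM : M = sSup ((fun τ => |deriv m τ|) '' Set.Icc (0:ℝ) T)) :
    ∀ τ ∈ Set.Icc (0:ℝ) T,
      |abcD α B m τ| ≤ M * B / (1 - α) * τ * mlE2 α 2 (α / (1 - α) * τ ^ α) := by
  intro τ hτ
  have hbound : ∀ σ ∈ Icc 0 T, |deriv m σ| ≤ M := fun σ hσ => by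
    rw [hM]
    exact le_csSup (isCompact_Icc.image_of_continuousOn hm'.abs).bddAbove ⟨σ, hσ, rfl⟩
  have hsub : Icc 0 τ ⊆ Icc 0 T := Icc_subset_Icc_right hτ.2
  have h1α : 0 < 1 - α := sub_pos.2 hα1
  calc |abcD α B m τ|
      = B / (1 - α) * |∫ σ in (0)..τ, mlE α (-(α / (1 - α)) * (τ - σ) ^ α) * deriv m σ| := by
        rw [abcD, abs_mul, abs_of_pos (div_pos hB h1α)]
    _ ≤ B / (1 - α) * (M * τ * mlE2 α 2 (α / (1 - α) * τ ^ α)) := by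
        gcongr
        exact abs_integral_mlE_mul_le hα (div_pos hα h1α).le hτ.1 (hm'.mono hsub)
          fun σ hσ => hbound σ (hsub hσ)
    _ = M * B / (1 - α) * τ * mlE2 α 2 (α / (1 - α) * τ ^ α) := by ring

theorem abc_deriv_bound
    (T α B M : ℝ) (hT : 0 < T) (hα : 0 < α) (hα1 : α < 1) (hB : 0 < B)
    (m : ℝ → ℝ)
    (hmdiff : ∀ τ ∈ Set.Icc (0:ℝ) T, DifferentiableAt ℝ m τ)
    (hm' : ContinuousOn (deriv m) (Set.Icc (0:ℝ) T))
    (hM : M = sSup ((fun τ => |deriv m τ|) '' Set.Icc (0:ℝ) T)) :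
    ∀ τ ∈ Set.Icc (0:ℝ) T,
      |abcD α B m τ| ≤ M * B / (1 - α) * τ * mlE2 α 2 (α / (1 - α) * τ ^ α) :=
  abc_deriv_bound_general T α B M hα hα1 hB m hm' hM
end

section
/- Let f : J × ℝ → ℝ satisfy: |f(σ, ω(σ))| ≤ M for all σ ∈ J along a continuous solution ω of the ABC integral equation on J with initial value ω₀, and the Lipschitz-type condition |f(τ₁, ω) − f(τ₂, η)| ≤ L₁|τ₁ − τ₂| + L₂|ω − η| for all τ₁, τ₂ ∈ J and ω, η ∈ ℝ, where L₁ > 0 and 0 < L₂ < B(α)/(1−α). Then for all 0 < τ₁ ≤ τ₂ < T, |ω(τ₁) − ω(τ₂)| ≤ (1/(1 − (1−α)L₂/B(α))) · [ ((1−α)L₁/B(α)) (τ₂ − τ₁) + (M/(B(α)Γ(α))) ( 2(τ₂ − τ₁)^α + τ₁^α − τ₂^α ) ]. In particular, the family of such solutions is equicontinuous on J. -/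
/-!
Subtracting the integral equation at `τ₁` and `τ₂`, the local term contributes at most
`(1-α)/B (L₁ (τ₂ - τ₁) + L₂ |ω τ₁ - ω τ₂|)`, and the memory term splits into an integral over
`[0, τ₁]` against the nonnegative kernel difference `(τ₁-σ)^(α-1) - (τ₂-σ)^(α-1)` and an integral
over `[τ₁, τ₂]` against `(τ₂-σ)^(α-1)`. Bounding `|f(σ, ω σ)|` by `M` and integrating the kernels
exactly gives `M/α (2(τ₂-τ₁)^α + τ₁^α - τ₂^α)`. Since `(1-α) L₂ / B < 1`, the term
`|ω τ₁ - ω τ₂|` on the right can be absorbed into the left-hand side.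
-/

open Set Filter Topology MeasureTheory intervalIntegral

theorem ContinuousOn.apply_of_dist_le {X Y Z : Type*} [PseudoMetricSpace X] [PseudoMetricSpace Y]
    [PseudoMetricSpace Z] {s : Set X} {f : X → Y → Z} {ω : X → Y} {L₁ L₂ : ℝ}
    (hω : ContinuousOn ω s)
    (hf : ∀ t ∈ s, ∀ t' ∈ s, ∀ x y, dist (f t x) (f t' y) ≤ L₁ * dist t t' + L₂ * dist x y) :
    ContinuousOn (fun t => f t (ω t)) s := by
  intro t ht
  rw [ContinuousWithinAt, tendsto_iff_dist_tendsto_zero]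
  have hbound : Tendsto (fun t' => L₁ * dist t' t + L₂ * dist (ω t') (ω t)) (𝓝[s] t) (𝓝 0) := by
    have h₁ : Tendsto (fun t' => dist t' t) (𝓝[s] t) (𝓝 0) :=
      tendsto_iff_dist_tendsto_zero.1 continuousWithinAt_id
    have h₂ : Tendsto (fun t' => dist (ω t') (ω t)) (𝓝[s] t) (𝓝 0) :=
      tendsto_iff_dist_tendsto_zero.1 (hω t ht)
    simpa using (h₁.const_mul L₁).add (h₂.const_mul L₂)
  exact squeeze_zero' (Eventually.of_forall fun _ => dist_nonneg)
    (eventually_nhdsWithin_of_forall fun t' ht' => hf t' ht' t ht _ _) hbound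

theorem intervalIntegrable_sub_rpow {r : ℝ} (hr : -1 < r) (c a b : ℝ) :
    IntervalIntegrable (fun σ => (c - σ) ^ r) volume a b := by
  simpa using (intervalIntegrable_rpow' (a := c - a) (b := c - b) hr).comp_sub_left c

theorem integral_sub_rpow_sub_one {α : ℝ} (hα : 0 < α) (c a b : ℝ) :
    ∫ σ in a..b, (c - σ) ^ (α - 1) = ((c - a) ^ α - (c - b) ^ α) / α := by
  rw [integral_comp_sub_left (fun x => x ^ (α - 1)) c, integral_rpow (Or.inl (by linarith)),
    sub_add_cancel]

theorem abs_integral_mul_le_mul_integral {k g : ℝ → ℝ} {a b M : ℝ} (hab : a ≤ b)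
    (hk : IntervalIntegrable k volume a b) (hg : ContinuousOn g (Icc a b))
    (hk0 : ∀ σ ∈ Ioo a b, 0 ≤ k σ) (hgM : ∀ σ ∈ Ioo a b, |g σ| ≤ M) :
    |∫ σ in a..b, k σ * g σ| ≤ M * ∫ σ in a..b, k σ := by
  have hkg : IntervalIntegrable (fun σ => k σ * g σ) volume a b :=
    hk.mul_continuousOn (by rwa [uIcc_of_le hab])
  calc |∫ σ in a..b, k σ * g σ| ≤ ∫ σ in a..b, |k σ * g σ| := abs_integral_le_integral_abs hab
    _ ≤ ∫ σ in a..b, M * k σ :=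
        integral_mono_on_of_le_Ioo hab hkg.abs (hk.const_mul M) fun σ hσ => by
          rw [abs_mul, abs_of_nonneg (hk0 σ hσ), mul_comm]
          exact mul_le_mul_of_nonneg_right (hgM σ hσ) (hk0 σ hσ)
    _ = M * ∫ σ in a..b, k σ := integral_const_mul M _

theorem abs_sub_integral_rpow_kernel_le {α M τ₁ τ₂ : ℝ} {g : ℝ → ℝ} (hα : 0 < α) (hα1 : α ≤ 1)
    (hτ₁ : 0 ≤ τ₁) (h12 : τ₁ ≤ τ₂) (hg : ContinuousOn g (Icc 0 τ₂))
    (hgM : ∀ σ ∈ Icc 0 τ₂, |g σ| ≤ M) :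
    |(∫ σ in (0:ℝ)..τ₁, (τ₁ - σ) ^ (α - 1) * g σ) - ∫ σ in (0:ℝ)..τ₂, (τ₂ - σ) ^ (α - 1) * g σ|
      ≤ M / α * (2 * (τ₂ - τ₁) ^ α + τ₁ ^ α - τ₂ ^ α) := by
  have hk (c a b : ℝ) := intervalIntegrable_sub_rpow (by linarith : -1 < α - 1) c a b
  have hg₁ : ContinuousOn g (Icc 0 τ₁) := hg.mono (Icc_subset_Icc_right h12)
  have hg₁₂ : ContinuousOn g (Icc τ₁ τ₂) := hg.mono (Icc_subset_Icc_left hτ₁)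
  have hkg (c : ℝ) : IntervalIntegrable (fun σ => (c - σ) ^ (α - 1) * g σ) volume 0 τ₁ :=
    (hk c 0 τ₁).mul_continuousOn (by rwa [uIcc_of_le hτ₁])
  have hsplit : (∫ σ in (0:ℝ)..τ₁, (τ₁ - σ) ^ (α - 1) * g σ)
        - ∫ σ in (0:ℝ)..τ₂, (τ₂ - σ) ^ (α - 1) * g σ
      = (∫ σ in (0:ℝ)..τ₁, ((τ₁ - σ) ^ (α - 1) - (τ₂ - σ) ^ (α - 1)) * g σ)
        - ∫ σ in τ₁..τ₂, (τ₂ - σ) ^ (α - 1) * g σ := by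
    rw [← integral_add_adjacent_intervals (hkg τ₂)
      ((hk τ₂ τ₁ τ₂).mul_continuousOn (by rwa [uIcc_of_le h12])), ← sub_sub,
      ← integral_sub (hkg τ₁) (hkg τ₂)]
    simp only [sub_mul]
  have hnear : |∫ σ in (0:ℝ)..τ₁, ((τ₁ - σ) ^ (α - 1) - (τ₂ - σ) ^ (α - 1)) * g σ|
      ≤ M * ((τ₁ ^ α - (τ₂ ^ α - (τ₂ - τ₁) ^ α)) / α) := by
    refine (abs_integral_mul_le_mul_integral hτ₁ ((hk τ₁ 0 τ₁).sub (hk τ₂ 0 τ₁)) hg₁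
      (fun σ hσ => sub_nonneg.2 (Real.rpow_le_rpow_of_nonpos (by linarith [hσ.2])
        (by linarith) (by linarith))) fun σ hσ => hgM σ ⟨hσ.1.le, by linarith [hσ.2]⟩).trans_eq ?_
    rw [integral_sub (hk τ₁ 0 τ₁) (hk τ₂ 0 τ₁), integral_sub_rpow_sub_one hα,
      integral_sub_rpow_sub_one hα, sub_self, Real.zero_rpow hα.ne', sub_zero, sub_zero, sub_zero, ← sub_div]
  have hfar : |∫ σ in τ₁..τ₂, (τ₂ - σ) ^ (α - 1) * g σ| ≤ M * ((τ₂ - τ₁) ^ α / α) := by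
    refine (abs_integral_mul_le_mul_integral h12 (hk τ₂ τ₁ τ₂) hg₁₂
      (fun σ hσ => Real.rpow_nonneg (by linarith [hσ.2]) _)
      fun σ hσ => hgM σ ⟨by linarith [hσ.1], hσ.2.le⟩).trans_eq ?_
    rw [integral_sub_rpow_sub_one hα, sub_self, Real.zero_rpow hα.ne', sub_zero]
  rw [hsplit]
  calc _ ≤ _ := abs_sub _ _
    _ ≤ _ := add_le_add hnear hfar
    _ = _ := by ring

theorem le_one_div_one_sub_mul_of_le_mul_add {x c R : ℝ} (hc : c < 1) (h : x ≤ c * x + R) :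
    x ≤ 1 / (1 - c) * R := by
  rw [one_div_mul_eq_div, le_div_iff₀ (sub_pos.2 hc)]
  linarith

theorem abc_integral_equation_equicontinuity_estimate_general
    (T α B M L₁ L₂ ω₀ : ℝ) (hα : 0 < α) (hα1 : α < 1) (hB : 0 < B)
    (f : ℝ → ℝ → ℝ) (ω : ℝ → ℝ)
    (hωc : ContinuousOn ω (Set.Icc (0:ℝ) T))
    (hsol : ∀ τ ∈ Set.Icc (0:ℝ) T,
      ω τ = ω₀ + (1 - α) / B * f τ (ω τ) +
        α / (B * Real.Gamma α) *
          ∫ σ in (0:ℝ)..τ, (τ - σ) ^ (α - 1) * f σ (ω σ))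
    (hM : ∀ σ ∈ Set.Icc (0:ℝ) T, |f σ (ω σ)| ≤ M)
    (hL₂' : L₂ < B / (1 - α))
    (hLip : ∀ τ₁ ∈ Set.Icc (0:ℝ) T, ∀ τ₂ ∈ Set.Icc (0:ℝ) T, ∀ x y : ℝ,
      |f τ₁ x - f τ₂ y| ≤ L₁ * |τ₁ - τ₂| + L₂ * |x - y|) :
    ∀ τ₁ τ₂ : ℝ, 0 < τ₁ → τ₁ ≤ τ₂ → τ₂ < T →
      |ω τ₁ - ω τ₂| ≤
        1 / (1 - (1 - α) * L₂ / B) *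
          ((1 - α) * L₁ / B * (τ₂ - τ₁) +
            M / (B * Real.Gamma α) *
              (2 * (τ₂ - τ₁) ^ α + τ₁ ^ α - τ₂ ^ α)) := by
  intro τ₁ τ₂ hτ₁ h12 hτ₂T
  have hmem₁ : τ₁ ∈ Icc 0 T := ⟨hτ₁.le, by linarith⟩
  have hmem₂ : τ₂ ∈ Icc 0 T := ⟨by linarith, hτ₂T.le⟩
  have hsub : Icc 0 τ₂ ⊆ Icc 0 T := Icc_subset_Icc_right hτ₂T.le
  have hg : ContinuousOn (fun σ => f σ (ω σ)) (Icc 0 T) :=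
    hωc.apply_of_dist_le (by simpa only [Real.dist_eq] using hLip)
  have hmemory := abs_sub_integral_rpow_kernel_le hα hα1.le hτ₁.le h12 (hg.mono hsub)
    fun σ hσ => hM σ (hsub hσ)
  have hlocal := hLip τ₁ hmem₁ τ₂ hmem₂ (ω τ₁) (ω τ₂)
  rw [abs_sub_comm τ₁, abs_of_nonneg (sub_nonneg.2 h12)] at hlocal
  have hc : (1 - α) * L₂ / B < 1 := by
    rw [div_lt_one hB, mul_comm, ← lt_div_iff₀ (by linarith)]
    exact hL₂'
  refine le_one_div_one_sub_mul_of_le_mul_add hc ?_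
  have hΓ : 0 < Real.Gamma α := Real.Gamma_pos_of_pos hα
  calc |ω τ₁ - ω τ₂|
      = |(1 - α) / B * (f τ₁ (ω τ₁) - f τ₂ (ω τ₂)) + α / (B * Real.Gamma α) *
          ((∫ σ in (0:ℝ)..τ₁, (τ₁ - σ) ^ (α - 1) * f σ (ω σ))
            - ∫ σ in (0:ℝ)..τ₂, (τ₂ - σ) ^ (α - 1) * f σ (ω σ))| := by
        congr 1; linear_combination hsol τ₁ hmem₁ - hsol τ₂ hmem₂
    _ ≤ (1 - α) / B * (L₁ * (τ₂ - τ₁) + L₂ * |ω τ₁ - ω τ₂|) + α / (B * Real.Gamma α) *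
          (M / α * (2 * (τ₂ - τ₁) ^ α + τ₁ ^ α - τ₂ ^ α)) := by
        refine (abs_add_le _ _).trans (add_le_add ?_ ?_) <;>
          rw [abs_mul, abs_of_nonneg (by positivity)] <;> gcongr
    _ = _ := by field_simp; ring

theorem abc_integral_equation_equicontinuity_estimate
    (T α B M L₁ L₂ ω₀ : ℝ) (hT : 0 < T) (hα : 0 < α) (hα1 : α < 1) (hB : 0 < B)
    (f : ℝ → ℝ → ℝ) (ω : ℝ → ℝ)
    (hωc : ContinuousOn ω (Set.Icc (0:ℝ) T))
    (hsol : ∀ τ ∈ Set.Icc (0:ℝ) T,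
      ω τ = ω₀ + (1 - α) / B * f τ (ω τ) +
        α / (B * Real.Gamma α) *
          ∫ σ in (0:ℝ)..τ, (τ - σ) ^ (α - 1) * f σ (ω σ))
    (hM : ∀ σ ∈ Set.Icc (0:ℝ) T, |f σ (ω σ)| ≤ M)
    (hL₁ : 0 < L₁) (hL₂ : 0 < L₂) (hL₂' : L₂ < B / (1 - α))
    (hLip : ∀ τ₁ ∈ Set.Icc (0:ℝ) T, ∀ τ₂ ∈ Set.Icc (0:ℝ) T, ∀ x y : ℝ,
      |f τ₁ x - f τ₂ y| ≤ L₁ * |τ₁ - τ₂| + L₂ * |x - y|) :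
    ∀ τ₁ τ₂ : ℝ, 0 < τ₁ → τ₁ ≤ τ₂ → τ₂ < T →
      |ω τ₁ - ω τ₂| ≤
        1 / (1 - (1 - α) * L₂ / B) *
          ((1 - α) * L₁ / B * (τ₂ - τ₁) +
            M / (B * Real.Gamma α) *
              (2 * (τ₂ - τ₁) ^ α + τ₁ ^ α - τ₂ ^ α)) :=
  abc_integral_equation_equicontinuity_estimate_general T α B M L₁ L₂ ω₀ hα hα1 hB f ω hωc hsol hM
    hL₂' hLip
end
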